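/- Let L be a G-graded field with graded subfields k ⊆ K ⊆ L and k ⊆ l ⊆ L, and let H ⊆ G be a subgroup containing ρ(l^×) (hence also ρ(k^×)). For a graded field F write F_H = ⊕_{h∈H} F_h, a graded subfield of F. Then the natural map P_{L/l} → P_{K/k} ×_{P_{K_H/k}} P_{L_H/l}, sending O to (O ∩ K, O ∩ L_H), is surjective: for any graded valuation ring O' of K containing k and any graded valuation ring O'' of L_H containing l with O' ∩ K_H = O'' ∩ K_H, there exists a graded valuation ring O of L containing l with O ∩ K = O' and O ∩ L_H = O''. -/

import Mathlib

universe u v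

/-- A `G`-graded commutative ring structure on `A`: graded pieces `deg g`,
multiplicativity of the grading, and an internal direct sum decomposition
recorded by the homogeneous-component function `comp`. -/
structure GradedStr (G : Type u) [CommGroup G] (A : Type v) [CommRing A] where
  deg : G → AddSubgroup A
  one_mem : (1 : A) ∈ deg 1
  mul_mem : ∀ {g h : G} {a b : A}, a ∈ deg g → b ∈ deg h → a * b ∈ deg (g * h)
  comp : A → G → A
  comp_mem : ∀ a g, comp a g ∈ deg g
  comp_add : ∀ a b g, comp (a + b) g = comp a g + comp b g
  comp_of_mem : ∀ {a : A} {g : G}, a ∈ deg g → comp a g = a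
  comp_of_mem_ne : ∀ {a : A} {g g' : G}, a ∈ deg g → g' ≠ g → comp a g' = 0
  finite_support : ∀ a : A, (Function.support (comp a)).Finite
  sum_comp : ∀ a : A, ∑ᶠ g, comp a g = a

namespace GradedStr

variable {G : Type u} [CommGroup G] {A : Type v} [CommRing A]

/-- `a` is homogeneous: it lies in some graded piece. -/
def IsHomog (𝒜 : GradedStr G A) (a : A) : Prop := ∃ g, a ∈ 𝒜.deg g

/-- A `G`-graded field: a nonzero graded ring in which every nonzero homogeneous
element is invertible. -/
def IsGradedField (𝒜 : GradedStr G A) : Prop :=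
  Nontrivial A ∧ ∀ a : A, 𝒜.IsHomog a → a ≠ 0 → IsUnit a

/-- A graded subring: a subring stable under taking homogeneous components. -/
def IsGradedSubring (𝒜 : GradedStr G A) (S : Subring A) : Prop :=
  ∀ x ∈ S, ∀ g, 𝒜.comp x g ∈ S

/-- A graded subfield of a graded field: a graded subring containing the inverses of
its nonzero homogeneous elements. -/
def IsGradedSubfield (𝒜 : GradedStr G A) (S : Subring A) : Prop :=
  𝒜.IsGradedSubring S ∧ ∀ x ∈ S, 𝒜.IsHomog x → x ≠ 0 → Ring.inverse x ∈ S

/-- The additive subgroup of homogeneous polynomials of grading `h` in `K[g₀⁻¹ T]`,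
the polynomial ring in which `T` is declared homogeneous of grading `g₀`: the
coefficient of `T^n` must be homogeneous of grading `h * g₀⁻ⁿ`. -/
def polyDeg (𝒜 : GradedStr G A) (g₀ h : G) : AddSubgroup (Polynomial A) where
  carrier := {p | ∀ n : ℕ, p.coeff n ∈ 𝒜.deg (h * (g₀ ^ n)⁻¹)}
  zero_mem' := by intro n; simpa using (𝒜.deg (h * (g₀ ^ n)⁻¹)).zero_mem
  add_mem' := by
    intro p q hp hq n
    rw [Polynomial.coeff_add]
    exact (𝒜.deg _).add_mem (hp n) (hq n)
  neg_mem' := by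
    intro p hp n
    rw [Polynomial.coeff_neg]
    exact (𝒜.deg _).neg_mem (hp n)

/-- A homogeneous polynomial in `K[g₀⁻¹T]`. -/
def IsHomogPoly (𝒜 : GradedStr G A) (g₀ : G) (p : Polynomial A) : Prop :=
  ∃ h, p ∈ 𝒜.polyDeg g₀ h

/-- The graded fraction field of a graded subring of a graded field, computed inside
the ambient graded field: the subring generated by `S` together with the inverses of
the nonzero homogeneous elements of `S`. -/
def fracIn (𝒜 : GradedStr G A) (S : Subring A) : Subring A :=
  Subring.closure (↑S ∪ {y : A | ∃ x ∈ S, x ≠ 0 ∧ 𝒜.IsHomog x ∧ y = Ring.inverse x})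

end GradedStr

/-- `x` is integral over the subring `S` (satisfies a monic polynomial equation with
coefficients in `S`). -/
def IntegralOver {A : Type v} [CommRing A] (S : Subring A) (x : A) : Prop :=
  ∃ p : Polynomial A, p.Monic ∧ (∀ n, p.coeff n ∈ S) ∧ Polynomial.eval x p = 0

/-- Algebraic independence of a family of elements over a subring: the evaluation map
from the (multivariate) polynomial ring is injective.  (For homogeneous elements this
is graded algebraic independence, the grading playing no role in injectivity.) -/
def AlgIndepOver {A : Type v} [CommRing A] {ι : Type*} (S : Subring A) (T : ι → A) : Prop :=
  Function.Injective (MvPolynomial.eval₂Hom S.subtype T)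

/-- A graded valuation ring of the graded subfield `F` of the ambient graded field:
a graded subring `O ⊆ F` such that every nonzero homogeneous element `f` of `F`
satisfies `f ∈ O` or `f⁻¹ ∈ O`. -/
def IsGVRofSubfield {G : Type u} [CommGroup G] {A : Type v} [CommRing A]
    (𝒜 : GradedStr G A) (F : Subring A) (O : Subring A) : Prop :=
  O ≤ F ∧ 𝒜.IsGradedSubring O ∧
    ∀ f ∈ F, f ≠ 0 → 𝒜.IsHomog f → f ∈ O ∨ Ring.inverse f ∈ O

section Statement17

variable {G : Type u} [CommGroup G] {L : Type v} [CommRing L]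

/-- The `H`-part `S_H = ⊕_{h∈H} S_h` of a graded subset `S`: the elements of `S` all
of whose nonzero homogeneous components have grading in `H`. -/
def HPart (𝒜 : GradedStr G L) (H : Subgroup G) (S : Set L) : Set L :=
  {x : L | x ∈ S ∧ ∀ g : G, g ∉ H → 𝒜.comp x g = 0}

/-- A graded valuation ring of the graded subfield `F` (all given as subsets):
a graded subring `O ⊆ F` such that every nonzero homogeneous `f ∈ F` satisfies
`f ∈ O` or `f⁻¹ ∈ O`. -/
def IsGVRofSet (𝒜 : GradedStr G L) (F O : Set L) : Prop :=
  O ⊆ F ∧ (0 : L) ∈ O ∧ (1 : L) ∈ O ∧ (∀ x ∈ O, ∀ y ∈ O, x + y ∈ O) ∧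
    (∀ x ∈ O, -x ∈ O) ∧ (∀ x ∈ O, ∀ y ∈ O, x * y ∈ O) ∧
    (∀ x ∈ O, ∀ g, 𝒜.comp x g ∈ O) ∧
    ∀ f ∈ F, f ≠ 0 → 𝒜.IsHomog f → f ∈ O ∨ Ring.inverse f ∈ O

/-!
A graded valuation ring `O` of `L` is determined by its homogeneous units, which form a total
cone `C` (`u ∈ C` or `u⁻¹ ∈ C`) in `Lˣ`; conversely, the elements all of whose homogeneous
components are `0` or lie in a total cone `C` form a graded valuation ring, provided `1 + t ∈ C`
whenever `t ∈ C` has grading `1` and `1 + t ≠ 0`. The rings `O'` and `O''` give total cones on the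
homogeneous units of `K` and of `L_H` that agree on their intersection, by `hcompat`. A submonoid
of `Lˣ` maximal among those avoiding the elements of either group lying outside its cone is total
(Zorn), and it restricts to the two given cones. The condition on `1 + t` only involves the
grading `1 ∈ H`, where it is inherited from `O''`.
-/

namespace Submonoid

variable {Γ : Type*} [CommGroup Γ]

theorem mem_of_pow_mem_of_total {C : Submonoid Γ} {x : Γ} (htot : x ∈ C ∨ x⁻¹ ∈ C) {n : ℕ}
    (hn : n ≠ 0) (h : x ^ n ∈ C) : x ∈ C := by
  refine htot.elim id fun hinv => ?_
  obtain ⟨m, rfl⟩ := Nat.exists_eq_succ_of_ne_zero hn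
  have hx : x = x ^ (m + 1) * x⁻¹ ^ m := by group
  rw [hx]
  exact C.mul_mem h (C.pow_mem hinv m)

theorem exists_eq_mul_pow_of_not_disjoint_sup {C : Submonoid Γ} {N : Set Γ} {x : Γ}
    (hC : Disjoint (C : Set Γ) N) (h : ¬Disjoint ((C ⊔ closure {x} : Submonoid Γ) : Set Γ) N) :
    ∃ z ∈ N, ∃ c ∈ C, ∃ m ≠ 0, z = c * x ^ m := by
  obtain ⟨_, hz, hzN⟩ := Set.not_disjoint_iff.mp h
  obtain ⟨c, hc, _, hw, rfl⟩ := mem_sup.mp hz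
  obtain ⟨m, rfl⟩ := mem_closure_singleton.mp hw
  refine ⟨_, hzN, c, hc, m, ?_, rfl⟩
  rintro rfl
  exact Set.disjoint_left.mp hC (by simp [hc]) hzN

theorem exists_total_of_disjoint (C₀ : Submonoid Γ) (N : Set Γ)
    (hC₀ : Disjoint (C₀ : Set Γ) N) (hinv : ∀ z ∈ N, z⁻¹ ∈ C₀)
    (hpow : ∀ z ∈ N, ∀ n ≠ 0, z ^ n ∈ N) :
    ∃ C : Submonoid Γ, C₀ ≤ C ∧ Disjoint (C : Set Γ) N ∧ ∀ x, x ∈ C ∨ x⁻¹ ∈ C := by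
  have hchain : ∀ c ⊆ {C : Submonoid Γ | Disjoint (C : Set Γ) N}, IsChain (· ≤ ·) c →
      ∀ y ∈ c, ∃ ub ∈ {C : Submonoid Γ | Disjoint (C : Set Γ) N}, ∀ z ∈ c, z ≤ ub := by
    refine fun c hc hchain y hy => ⟨sSup c, Set.disjoint_left.mpr fun z hz hzN => ?_,
      fun _ => le_sSup⟩
    obtain ⟨C, hCc, hzC⟩ := (mem_sSup_of_directedOn ⟨y, hy⟩ hchain.directedOn).mp hz
    exact Set.disjoint_left.mp (hc hCc) hzC hzN
  obtain ⟨C, hC₀C, hCN, hmax⟩ := zorn_le_nonempty₀ _ hchain C₀ hC₀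
  refine ⟨C, hC₀C, hCN, fun x => ?_⟩
  by_contra! hx
  have hext : ∀ y ∉ C, ∃ z ∈ N, ∃ c ∈ C, ∃ m ≠ 0, z = c * y ^ m := fun y hy =>
    exists_eq_mul_pow_of_not_disjoint_sup hCN fun hdisj =>
      hy (hmax hdisj le_sup_left (le_sup_right (a := C) (subset_closure rfl)))
  obtain ⟨z, hzN, c, hc, m, -, rfl⟩ := hext x hx.1
  obtain ⟨w, hwN, d, hd, j, hj, rfl⟩ := hext x⁻¹ hx.2
  -- the powers of `x` cancel, leaving `z ^ j` as a product of elements of `C`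
  have hzj : (c * x ^ m) ^ j = c ^ j * d ^ m * (d * x⁻¹ ^ j)⁻¹ ^ m := by
    simp only [mul_pow, inv_pow, ← pow_mul, mul_inv, inv_inv]
    rw [mul_comm m j, mul_assoc, mul_inv_cancel_left]
  refine Set.disjoint_left.mp hCN ?_ (hpow _ hzN j hj)
  rw [hzj]
  exact C.mul_mem (C.mul_mem (C.pow_mem hc j) (C.pow_mem hd m))
    (C.pow_mem (hC₀C (hinv _ hwN)) m)

section Extension

variable {A B : Subgroup Γ} {CA CB : Submonoid Γ}

theorem mul_mem_of_compat (hCA : CA ≤ A.toSubmonoid) (hCB : CB ≤ B.toSubmonoid)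
    (hcompat : ∀ x ∈ A, x ∈ B → (x ∈ CA ↔ x ∈ CB)) {a b : Γ} (ha : a ∈ CA) (hb : b ∈ CB)
    (hab : a * b ∈ A) : a * b ∈ CA := by
  have hbA : b ∈ A := by simpa using A.mul_mem (A.inv_mem (hCA ha)) hab
  exact CA.mul_mem ha ((hcompat b hbA (hCB hb)).mpr hb)

theorem exists_total_extension (hCA : CA ≤ A.toSubmonoid) (hCB : CB ≤ B.toSubmonoid)
    (hCAt : ∀ x ∈ A, x ∈ CA ∨ x⁻¹ ∈ CA) (hCBt : ∀ x ∈ B, x ∈ CB ∨ x⁻¹ ∈ CB)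
    (hcompat : ∀ x ∈ A, x ∈ B → (x ∈ CA ↔ x ∈ CB)) :
    ∃ C : Submonoid Γ, (∀ x, x ∈ C ∨ x⁻¹ ∈ C) ∧ (∀ x ∈ A, x ∈ C ↔ x ∈ CA) ∧
      ∀ x ∈ B, x ∈ C ↔ x ∈ CB := by
  set N : Set Γ := {x | x ∈ A ∧ x ∉ CA} ∪ {x | x ∈ B ∧ x ∉ CB}
  have hdisj : Disjoint ((CA ⊔ CB : Submonoid Γ) : Set Γ) N := by
    refine Set.disjoint_left.mpr fun z hz hzN => ?_
    obtain ⟨a, ha, b, hb, rfl⟩ := mem_sup.mp hz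
    rcases hzN with ⟨hzA, hzCA⟩ | ⟨hzB, hzCB⟩
    · exact hzCA (mul_mem_of_compat hCA hCB hcompat ha hb hzA)
    · rw [mul_comm] at hzB hzCB
      exact hzCB (mul_mem_of_compat hCB hCA (fun x hxB hxA => (hcompat x hxA hxB).symm)
        hb ha hzB)
  have hinv : ∀ z ∈ N, z⁻¹ ∈ CA ⊔ CB := by
    rintro z (⟨hzA, hzCA⟩ | ⟨hzB, hzCB⟩)
    · exact le_sup_left (a := CA) ((hCAt z hzA).resolve_left hzCA)
    · exact le_sup_right (a := CA) ((hCBt z hzB).resolve_left hzCB)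
  have hpow : ∀ z ∈ N, ∀ n ≠ 0, z ^ n ∈ N := by
    rintro z (⟨hzA, hzCA⟩ | ⟨hzB, hzCB⟩) n hn
    · exact Or.inl ⟨A.pow_mem hzA n, fun h => hzCA (mem_of_pow_mem_of_total (hCAt z hzA) hn h)⟩
    · exact Or.inr ⟨B.pow_mem hzB n, fun h => hzCB (mem_of_pow_mem_of_total (hCBt z hzB) hn h)⟩
  obtain ⟨C, hle, hCN, htot⟩ := exists_total_of_disjoint _ N hdisj hinv hpow
  refine ⟨C, htot, fun x hxA => ⟨fun hx => ?_, fun hx => hle (le_sup_left (a := CA) hx)⟩,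
    fun x hxB => ⟨fun hx => ?_, fun hx => hle (le_sup_right (a := CA) hx)⟩⟩
  · by_contra hxCA
    exact Set.disjoint_left.mp hCN hx (Or.inl ⟨hxA, hxCA⟩)
  · by_contra hxCB
    exact Set.disjoint_left.mp hCN hx (Or.inr ⟨hxB, hxCB⟩)

end Extension

theorem neg_one_mem_of_total {M : Type*} [Monoid M] [HasDistribNeg M]
    {C : Submonoid Mˣ} (htot : ∀ u, u ∈ C ∨ u⁻¹ ∈ C) : (-1 : Mˣ) ∈ C := by
  simpa using htot (-1)

def withZeroOfUnits {M : Type*} [MonoidWithZero M] (C : Submonoid Mˣ) :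
    Submonoid M where
  carrier := insert 0 (Units.val '' (C : Set Mˣ))
  one_mem' := Or.inr ⟨1, C.one_mem, rfl⟩
  mul_mem' := by
    rintro _ _ (rfl | ⟨u, hu, rfl⟩) (rfl | ⟨v, hv, rfl⟩)
    · exact Or.inl (zero_mul _)
    · exact Or.inl (zero_mul _)
    · exact Or.inl (mul_zero _)
    · exact Or.inr ⟨u * v, C.mul_mem hu hv, rfl⟩

theorem mem_withZeroOfUnits {M : Type*} [MonoidWithZero M] {C : Submonoid Mˣ}
    {x : M} : x ∈ C.withZeroOfUnits ↔ x = 0 ∨ ∃ u ∈ C, (u : M) = x :=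
  Iff.rfl

theorem coe_mem_withZeroOfUnits_iff {M : Type*} [MonoidWithZero M] [Nontrivial M]
    {C : Submonoid Mˣ} {u : Mˣ} : (u : M) ∈ C.withZeroOfUnits ↔ u ∈ C := by
  simp [mem_withZeroOfUnits, Units.ne_zero, Units.val_inj]

end Submonoid

def IsGVRofSet.toSubring {𝒜 : GradedStr G L} {F O : Set L} (h : IsGVRofSet 𝒜 F O) :
    Subring L where
  carrier := O
  zero_mem' := h.2.1
  one_mem' := h.2.2.1
  add_mem' hx hy := h.2.2.2.1 _ hx _ hy
  neg_mem' hx := h.2.2.2.2.1 _ hx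
  mul_mem' hx hy := h.2.2.2.2.2.1 _ hx _ hy

namespace GradedStr

variable (𝒜 : GradedStr G L)

theorem comp_zero (g : G) : 𝒜.comp 0 g = 0 :=
  𝒜.comp_of_mem (𝒜.deg g).zero_mem

def compHom (g : G) : L →+ L where
  toFun x := 𝒜.comp x g
  map_zero' := 𝒜.comp_zero g
  map_add' x y := 𝒜.comp_add x y g

theorem comp_neg (x : L) (g : G) : 𝒜.comp (-x) g = -𝒜.comp x g :=
  (𝒜.compHom g).map_neg x

variable {𝒜}

theorem mem_deg_of_comp_eq_zero {x : L} {g : G} (h : ∀ g' ≠ g, 𝒜.comp x g' = 0) :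
    x ∈ 𝒜.deg g := by
  rw [← 𝒜.sum_comp x, finsum_eq_single _ g h]
  exact 𝒜.comp_mem x g

theorem comp_mem_of_mem_deg {S : Set L} (h0 : 0 ∈ S) {x : L} {g : G} (hxS : x ∈ S)
    (hx : x ∈ 𝒜.deg g) (g' : G) : 𝒜.comp x g' ∈ S := by
  by_cases h : g' = g
  · rwa [h, 𝒜.comp_of_mem hx]
  · rwa [𝒜.comp_of_mem_ne hx h]

theorem mem_of_forall_comp_mem {P : AddSubmonoid L} {x : L} (h : ∀ g, 𝒜.comp x g ∈ P) :
    x ∈ P := by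
  rw [← 𝒜.sum_comp x]
  exact finsum_induction (· ∈ P) P.zero_mem (fun _ _ => P.add_mem) h

theorem comp_mul_of_mem_left {a : L} {g : G} (ha : a ∈ 𝒜.deg g) (y : L) (g' : G) :
    𝒜.comp (a * y) g' = a * 𝒜.comp y (g⁻¹ * g') := by
  have hsupp : (Function.support fun h => a * 𝒜.comp y h).Finite :=
    (𝒜.finite_support y).subset (Function.support_mul_subset_right _ _)
  conv_lhs => rw [← 𝒜.sum_comp y, mul_finsum' _ _ (𝒜.finite_support y)]
  change 𝒜.compHom g' _ = _
  rw [AddMonoidHom.map_finsum _ hsupp, finsum_eq_single _ (g⁻¹ * g')]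
  · exact 𝒜.comp_of_mem (by simpa using 𝒜.mul_mem ha (𝒜.comp_mem y (g⁻¹ * g')))
  · refine fun h hne => 𝒜.comp_of_mem_ne (𝒜.mul_mem ha (𝒜.comp_mem y h)) fun e => hne ?_
    rw [e, inv_mul_cancel_left]

theorem comp_mul (x y : L) (g₀ : G) :
    𝒜.comp (x * y) g₀ = ∑ᶠ g, 𝒜.comp x g * 𝒜.comp y (g⁻¹ * g₀) := by
  have hsupp : (Function.support fun g => 𝒜.comp x g * y).Finite :=
    (𝒜.finite_support x).subset (Function.support_mul_subset_left _ _)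
  conv_lhs => rw [← 𝒜.sum_comp x, finsum_mul' _ _ (𝒜.finite_support x)]
  change 𝒜.compHom g₀ _ = _
  rw [AddMonoidHom.map_finsum _ hsupp]
  exact finsum_congr fun g => 𝒜.comp_mul_of_mem_left (𝒜.comp_mem x g) y g₀

theorem coe_inv_mem_deg_inv {u : Lˣ} {g : G} (hu : (u : L) ∈ 𝒜.deg g) :
    ((u⁻¹ : Lˣ) : L) ∈ 𝒜.deg g⁻¹ := by
  refine mem_deg_of_comp_eq_zero fun g' hg' => ?_
  have h := 𝒜.comp_mul_of_mem_left hu (↑u⁻¹ : L) (g * g')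
  rw [Units.mul_inv, inv_mul_cancel_left,
    𝒜.comp_of_mem_ne 𝒜.one_mem fun e => hg' (eq_inv_of_mul_eq_one_right e)] at h
  exact (Units.mul_right_eq_zero u).mp h.symm

variable (𝒜) in
def homogUnits (H : Subgroup G) : Subgroup Lˣ where
  carrier := {u | ∃ g ∈ H, (u : L) ∈ 𝒜.deg g}
  one_mem' := ⟨1, H.one_mem, 𝒜.one_mem⟩
  mul_mem' := by
    rintro u v ⟨g, hg, hu⟩ ⟨h, hh, hv⟩
    exact ⟨g * h, H.mul_mem hg hh, 𝒜.mul_mem hu hv⟩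
  inv_mem' := by
    rintro u ⟨g, hg, hu⟩
    exact ⟨g⁻¹, H.inv_mem hg, coe_inv_mem_deg_inv hu⟩

theorem mem_homogUnits_top_inf_units [Nontrivial L] {F : Subring L}
    (hF : 𝒜.IsGradedSubfield F) {u : Lˣ} {g : G} (hu : (u : L) ∈ 𝒜.deg g) (huF : (u : L) ∈ F) :
    u ∈ 𝒜.homogUnits ⊤ ⊓ F.toSubmonoid.units := by
  refine ⟨⟨g, Subgroup.mem_top g, hu⟩, huF, ?_⟩
  change ((u⁻¹ : Lˣ) : L) ∈ F
  rw [← Ring.inverse_unit]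
  exact hF.2 _ huF ⟨g, hu⟩ u.ne_zero

theorem coe_mem_or_inv_mem [Nontrivial L] {F O : Set L}
    (hval : ∀ f ∈ F, f ≠ 0 → 𝒜.IsHomog f → f ∈ O ∨ Ring.inverse f ∈ O) {u : Lˣ}
    (huF : (u : L) ∈ F) (hu : 𝒜.IsHomog u) : (u : L) ∈ O ∨ ((u⁻¹ : Lˣ) : L) ∈ O := by
  simpa only [Ring.inverse_unit] using hval _ huF u.ne_zero hu

theorem mem_HPart_of_mem_deg {H : Subgroup G} {S : Set L} {x : L} {g : G} (hxS : x ∈ S)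
    (hx : x ∈ 𝒜.deg g) (hg : g ∈ H) : x ∈ HPart 𝒜 H S :=
  ⟨hxS, fun _ hg' => 𝒜.comp_of_mem_ne hx fun e => hg' (e ▸ hg)⟩

theorem mem_of_mem_HPart_of_mem_deg {H : Subgroup G} {S : Set L} {x : L} {g : G}
    (hxH : x ∈ HPart 𝒜 H S) (hx : x ∈ 𝒜.deg g) (hx0 : x ≠ 0) : g ∈ H := by
  by_contra hg
  exact hx0 (by rw [← 𝒜.comp_of_mem hx, hxH.2 g hg])

theorem comp_mem_HPart {H : Subgroup G} {S : Set L} (hS : ∀ x ∈ S, ∀ g, 𝒜.comp x g ∈ S)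
    {x : L} (hx : x ∈ HPart 𝒜 H S) (g : G) : 𝒜.comp x g ∈ HPart 𝒜 H S := by
  by_cases hg : g ∈ H
  · exact mem_HPart_of_mem_deg (hS x hx.1 g) (𝒜.comp_mem x g) hg
  · rw [hx.2 g hg]
    exact ⟨hx.2 g hg ▸ hS x hx.1 g, fun g' _ => 𝒜.comp_zero g'⟩

section CompSubring

variable (𝒜) in
def compSubring (M : Submonoid L) (h0 : (0 : L) ∈ M) (hneg : ∀ x ∈ M, -x ∈ M)
    (hadd : ∀ g, ∀ x ∈ M, ∀ y ∈ M, x ∈ 𝒜.deg g → y ∈ 𝒜.deg g → x + y ∈ M) : Subring L where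
  carrier := {x | ∀ g, 𝒜.comp x g ∈ M}
  zero_mem' g := by
    rw [𝒜.comp_zero]
    exact h0
  one_mem' := comp_mem_of_mem_deg h0 M.one_mem 𝒜.one_mem
  add_mem' {x y} hx hy g := by
    rw [𝒜.comp_add]
    exact hadd g _ (hx g) _ (hy g) (𝒜.comp_mem x g) (𝒜.comp_mem y g)
  neg_mem' {x} hx g := by
    rw [𝒜.comp_neg]
    exact hneg _ (hx g)
  mul_mem' {x y} hx hy g := by
    rw [𝒜.comp_mul]
    refine (finsum_induction (fun z => z ∈ M ∧ z ∈ 𝒜.deg g) ⟨h0, zero_mem _⟩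
      (fun a b ha hb => ⟨hadd g a ha.1 b hb.1 ha.2 hb.2, add_mem ha.2 hb.2⟩)
      fun g' => ⟨M.mul_mem (hx g') (hy _), ?_⟩).1
    simpa using 𝒜.mul_mem (𝒜.comp_mem x g') (𝒜.comp_mem y (g'⁻¹ * g))

variable {M : Submonoid L} {h0 : (0 : L) ∈ M} {hneg : ∀ x ∈ M, -x ∈ M}
  {hadd : ∀ g, ∀ x ∈ M, ∀ y ∈ M, x ∈ 𝒜.deg g → y ∈ 𝒜.deg g → x + y ∈ M}

theorem isGradedSubring_compSubring : 𝒜.IsGradedSubring (𝒜.compSubring M h0 hneg hadd) :=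
  fun x hx g => comp_mem_of_mem_deg h0 (hx g) (𝒜.comp_mem x g)

theorem mem_compSubring_iff_of_mem_deg {x : L} {g : G} (hx : x ∈ 𝒜.deg g) :
    x ∈ 𝒜.compSubring M h0 hneg hadd ↔ x ∈ M :=
  ⟨fun h => 𝒜.comp_of_mem hx ▸ h g, fun h => comp_mem_of_mem_deg h0 h hx⟩

end CompSubring

section Cone

variable {C : Submonoid Lˣ}

theorem neg_mem_withZeroOfUnits (htot : ∀ u, u ∈ C ∨ u⁻¹ ∈ C) {x : L}
    (hx : x ∈ C.withZeroOfUnits) : -x ∈ C.withZeroOfUnits := by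
  rcases hx with rfl | ⟨u, hu, rfl⟩
  · exact Or.inl neg_zero
  · refine Or.inr ⟨-u, ?_, Units.val_neg u⟩
    simpa using C.mul_mem (Submonoid.neg_one_mem_of_total htot) hu

theorem coe_add_coe_mem_withZeroOfUnits (hL : 𝒜.IsGradedField)
    (hone_add : ∀ t ∈ C, ∀ v : Lˣ, (t : L) ∈ 𝒜.deg 1 → (v : L) = 1 + t → v ∈ C)
    {a b : Lˣ} {g : G} (ha : a ∈ C) (hag : (a : L) ∈ 𝒜.deg g) (hbg : (b : L) ∈ 𝒜.deg g)
    (hba : b * a⁻¹ ∈ C) : (a + b : L) ∈ C.withZeroOfUnits := by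
  have ht1 : ((b * a⁻¹ : Lˣ) : L) ∈ 𝒜.deg 1 := by
    simpa using 𝒜.mul_mem hbg (coe_inv_mem_deg_inv hag)
  have hab : (a + b : L) = a * (1 + ((b * a⁻¹ : Lˣ) : L)) := by
    rw [mul_add, mul_one, Units.val_mul, mul_left_comm, Units.mul_inv, mul_one]
  rcases eq_or_ne (1 + ((b * a⁻¹ : Lˣ) : L)) 0 with h | h
  · exact Or.inl (by rw [hab, h, mul_zero])
  · obtain ⟨v, hv⟩ := hL.2 _ ⟨1, add_mem 𝒜.one_mem ht1⟩ h
    exact Or.inr ⟨a * v, C.mul_mem ha (hone_add _ hba v ht1 hv), by rw [hab, Units.val_mul, hv]⟩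

theorem add_mem_withZeroOfUnits (hL : 𝒜.IsGradedField) (htot : ∀ u, u ∈ C ∨ u⁻¹ ∈ C)
    (hone_add : ∀ t ∈ C, ∀ v : Lˣ, (t : L) ∈ 𝒜.deg 1 → (v : L) = 1 + t → v ∈ C)
    (g : G) {x : L} (hx : x ∈ C.withZeroOfUnits) {y : L} (hy : y ∈ C.withZeroOfUnits)
    (hxg : x ∈ 𝒜.deg g) (hyg : y ∈ 𝒜.deg g) : x + y ∈ C.withZeroOfUnits := by
  rcases hx with rfl | ⟨a, ha, rfl⟩
  · rwa [zero_add]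
  rcases hy with rfl | ⟨b, hb, rfl⟩
  · rw [add_zero]
    exact Or.inr ⟨a, ha, rfl⟩
  rcases htot (b * a⁻¹) with hba | hab
  · exact coe_add_coe_mem_withZeroOfUnits hL hone_add ha hxg hyg hba
  · rw [add_comm]
    exact coe_add_coe_mem_withZeroOfUnits hL hone_add hb hyg hxg (by simpa using hab)

variable {h0 : (0 : L) ∈ C.withZeroOfUnits}
  {hneg : ∀ x ∈ C.withZeroOfUnits, -x ∈ C.withZeroOfUnits}
  {hadd : ∀ g, ∀ x ∈ C.withZeroOfUnits, ∀ y ∈ C.withZeroOfUnits, x ∈ 𝒜.deg g → y ∈ 𝒜.deg g →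
    x + y ∈ C.withZeroOfUnits}

theorem isGVRofSubfield_top_compSubring (hL : 𝒜.IsGradedField)
    (htot : ∀ u, u ∈ C ∨ u⁻¹ ∈ C) :
    IsGVRofSubfield 𝒜 ⊤ (𝒜.compSubring C.withZeroOfUnits h0 hneg hadd) := by
  have := hL.1
  refine ⟨le_top, isGradedSubring_compSubring, fun f _ hf0 ⟨g, hfg⟩ => ?_⟩
  obtain ⟨u, rfl⟩ := hL.2 f ⟨g, hfg⟩ hf0
  rw [Ring.inverse_unit, mem_compSubring_iff_of_mem_deg hfg,
    mem_compSubring_iff_of_mem_deg (coe_inv_mem_deg_inv hfg),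
    Submonoid.coe_mem_withZeroOfUnits_iff, Submonoid.coe_mem_withZeroOfUnits_iff]
  exact htot u

theorem coe_compSubring_inter_eq (hL : 𝒜.IsGradedField) {R : Set L}
    (hR : ∀ x ∈ R, ∀ g, 𝒜.comp x g ∈ R) (P : AddSubmonoid L) (hPR : (P : Set L) ⊆ R)
    (hP : ∀ x ∈ P, ∀ g, 𝒜.comp x g ∈ P)
    (hCP : ∀ (u : Lˣ) (g : G), (u : L) ∈ 𝒜.deg g → (u : L) ∈ R → (u ∈ C ↔ (u : L) ∈ P)) :
    ↑(𝒜.compSubring C.withZeroOfUnits h0 hneg hadd) ∩ R = P := by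
  ext x
  refine ⟨fun ⟨hxO, hxR⟩ => mem_of_forall_comp_mem (𝒜 := 𝒜) fun g => ?_,
    fun hxP => ⟨fun g => ?_, hPR hxP⟩⟩
  · rcases hxO g with h | ⟨u, hu, hux⟩
    · rw [h]
      exact P.zero_mem
    · rw [← hux]
      exact (hCP u g (hux ▸ 𝒜.comp_mem x g) (hux ▸ hR x hxR g)).mp hu
  · rcases eq_or_ne (𝒜.comp x g) 0 with h | h
    · exact Or.inl h
    · obtain ⟨u, hux⟩ := hL.2 _ ⟨g, 𝒜.comp_mem x g⟩ h
      refine Or.inr ⟨u, (hCP u g ?_ ?_).mpr ?_, hux⟩ <;> rw [hux]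
      exacts [𝒜.comp_mem x g, hPR (hP x hxP g), hP x hxP g]

end Cone

theorem exists_total_cone_of_compat (hL : 𝒜.IsGradedField) {K : Subring L}
    (hK : 𝒜.IsGradedSubfield K) {H : Subgroup G} {O' : Subring L} (hO' : IsGVRofSubfield 𝒜 K O')
    {O'' : Set L} (hO'' : IsGVRofSet 𝒜 (HPart 𝒜 H Set.univ) O'')
    (hcompat : ↑O' ∩ HPart 𝒜 H ↑K = O'' ∩ HPart 𝒜 H ↑K) :
    ∃ C : Submonoid Lˣ, (∀ u, u ∈ C ∨ u⁻¹ ∈ C) ∧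
      (∀ (u : Lˣ) (g : G), (u : L) ∈ 𝒜.deg g → (u : L) ∈ K → (u ∈ C ↔ (u : L) ∈ O')) ∧
      ∀ (u : Lˣ), ∀ g ∈ H, (u : L) ∈ 𝒜.deg g → (u ∈ C ↔ (u : L) ∈ O'') := by
  have := hL.1
  have ⟨_, _, _, _, _, _, _, hO''val⟩ := hO''
  set A := 𝒜.homogUnits ⊤ ⊓ K.toSubmonoid.units
  set B := 𝒜.homogUnits H
  set CA := A.toSubmonoid ⊓ O'.toSubmonoid.comap (Units.coeHom L)
  set CB := B.toSubmonoid ⊓ hO''.toSubring.toSubmonoid.comap (Units.coeHom L)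
  have hCAt : ∀ u ∈ A, u ∈ CA ∨ u⁻¹ ∈ CA := by
    rintro u ⟨⟨g, -, hu⟩, huK, -⟩
    have huA := mem_homogUnits_top_inf_units hK hu huK
    exact (coe_mem_or_inv_mem hO'.2.2 huK ⟨g, hu⟩).imp (⟨huA, ·⟩) (⟨A.inv_mem huA, ·⟩)
  have hCBt : ∀ u ∈ B, u ∈ CB ∨ u⁻¹ ∈ CB := by
    rintro u ⟨g, hg, hu⟩
    have huH := mem_HPart_of_mem_deg (Set.mem_univ _) hu hg
    exact (coe_mem_or_inv_mem hO''val huH ⟨g, hu⟩).imp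
      (⟨⟨g, hg, hu⟩, ·⟩) (⟨B.inv_mem ⟨g, hg, hu⟩, ·⟩)
  have hCAB : ∀ u ∈ A, u ∈ B → (u ∈ CA ↔ u ∈ CB) := by
    rintro u huA ⟨g, hg, hu⟩
    have huHK : (u : L) ∈ HPart 𝒜 H K := mem_HPart_of_mem_deg huA.2.1 hu hg
    have h := Set.ext_iff.mp hcompat u
    simp only [Set.mem_inter_iff, huHK, and_true] at h
    exact ⟨fun hu' => ⟨⟨g, hg, hu⟩, h.mp hu'.2⟩, fun hu' => ⟨huA, h.mpr hu'.2⟩⟩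
  obtain ⟨C, htot, hCA, hCB⟩ :=
    Submonoid.exists_total_extension inf_le_left inf_le_left hCAt hCBt hCAB
  refine ⟨C, htot, fun u g hu huK => ?_, fun u g hg hu => ?_⟩
  · have huA := mem_homogUnits_top_inf_units hK hu huK
    exact (hCA u huA).trans ⟨And.right, (⟨huA, ·⟩)⟩
  · have huB : u ∈ B := ⟨g, hg, hu⟩
    exact (hCB u huB).trans ⟨And.right, (⟨huB, ·⟩)⟩

end GradedStr

theorem psi_fiber_product_surjective_general
    (𝒜 : GradedStr G L) (hL : 𝒜.IsGradedField)
    (K l : Subring L)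
    (hK : 𝒜.IsGradedSubfield K)
    (H : Subgroup G)
    (O' : Subring L) (hO' : IsGVRofSubfield 𝒜 K O')
    (O'' : Set L) (hO'' : IsGVRofSet 𝒜 (HPart 𝒜 H Set.univ) O'')
    (hlO'' : (l : Set L) ⊆ O'')
    (hcompat : ↑O' ∩ HPart 𝒜 H ↑K = O'' ∩ HPart 𝒜 H ↑K) :
    ∃ O : Subring L, (IsGVRofSubfield 𝒜 ⊤ O ∧ l ≤ O) ∧
      O ⊓ K = O' ∧ ↑O ∩ HPart 𝒜 H Set.univ = O'' := by
  have := hL.1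
  have ⟨hO''H, _, _, _, _, _, hO''comp, _⟩ := hO''
  obtain ⟨C, htot, hCK, hCH⟩ := GradedStr.exists_total_cone_of_compat hL hK hO' hO'' hcompat
  -- `1 + t` has grading `1 ∈ H`, so it is tested against `O''`, which is closed under addition
  have hone_add : ∀ t ∈ C, ∀ v : Lˣ, (t : L) ∈ 𝒜.deg 1 → (v : L) = 1 + t → v ∈ C :=
    fun t ht v ht1 hv => (hCH v 1 H.one_mem (hv ▸ add_mem 𝒜.one_mem ht1)).mpr <| hv ▸
      hO''.toSubring.add_mem hO''.toSubring.one_mem ((hCH t 1 H.one_mem ht1).mp ht)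
  set O := 𝒜.compSubring C.withZeroOfUnits (Or.inl rfl)
    (fun _ => GradedStr.neg_mem_withZeroOfUnits htot)
    (GradedStr.add_mem_withZeroOfUnits hL htot hone_add)
  have hOK : O ⊓ K = O' := SetLike.coe_injective <| by
    rw [Subring.coe_inf]
    exact GradedStr.coe_compSubring_inter_eq hL hK.1 O'.toAddSubmonoid hO'.1 hO'.2.1 hCK
  have hOH : ↑O ∩ HPart 𝒜 H Set.univ = O'' :=
    GradedStr.coe_compSubring_inter_eq hL
      (fun _ => GradedStr.comp_mem_HPart fun _ _ _ => Set.mem_univ _)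
      hO''.toSubring.toAddSubmonoid hO''H hO''comp
      fun u g hu huH => hCH u g (GradedStr.mem_of_mem_HPart_of_mem_deg huH hu u.ne_zero) hu
  exact ⟨O, ⟨GradedStr.isGVRofSubfield_top_compSubring hL htot,
    fun x hx => (hOH.symm ▸ hlO'' hx : x ∈ (O : Set L) ∩ HPart 𝒜 H Set.univ).1⟩, hOK, hOH⟩

/-- Let `L` be a `G`-graded field with graded subfields
`k ⊆ K ⊆ L` and `k ⊆ l ⊆ L`, and let `H ⊆ G` be a subgroup containing `ρ(l^×)`.
The natural map `P_{L/l} → P_{K/k} ×_{P_{K_H/k}} P_{L_H/l}`, `O ↦ (O ∩ K, O ∩ L_H)`,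
is surjective: for any graded valuation ring `O'` of `K` containing `k` and any
graded valuation ring `O''` of `L_H` containing `l` with `O' ∩ K_H = O'' ∩ K_H`,
there exists a graded valuation ring `O` of `L` containing `l` with `O ∩ K = O'` and
`O ∩ L_H = O''`. -/
theorem psi_fiber_product_surjective
    (𝒜 : GradedStr G L) (hL : 𝒜.IsGradedField)
    (k K l : Subring L)
    (hk : 𝒜.IsGradedSubfield k) (hK : 𝒜.IsGradedSubfield K)
    (hl : 𝒜.IsGradedSubfield l) (hkK : k ≤ K) (hkl : k ≤ l)
    (H : Subgroup G)
    (hlH : ∀ x ∈ l, x ≠ 0 → ∀ g : G, x ∈ 𝒜.deg g → g ∈ H)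
    (O' : Subring L) (hO' : IsGVRofSubfield 𝒜 K O') (hkO' : k ≤ O')
    (O'' : Set L) (hO'' : IsGVRofSet 𝒜 (HPart 𝒜 H Set.univ) O'')
    (hlO'' : (l : Set L) ⊆ O'')
    (hcompat : ↑O' ∩ HPart 𝒜 H ↑K = O'' ∩ HPart 𝒜 H ↑K) :
    ∃ O : Subring L, (IsGVRofSubfield 𝒜 ⊤ O ∧ l ≤ O) ∧
      O ⊓ K = O' ∧ ↑O ∩ HPart 𝒜 H Set.univ = O'' :=
  psi_fiber_product_surjective_general 𝒜 hL K l hK H O' hO' O'' hO'' hlO'' hcompat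

end Statement17
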